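/- For any condition (d, π, F) ∈ ℙℝ₀ (so F ⊆ ω^ω ∖ 0*), any f ∈ 0*, and any m < ω, there exist n ≥ m and a condition (d′, π′, F) ≤ (d, π, F) such that d′(n) = 1, f↾n ∈ dom(π′_n), and π′_n(f↾n) ≠ f(n). Hence the set of conditions forcing a disagreement of the generic predictor with f beyond m is dense in ℙℝ₀. -/
import Mathlib


open Filter Set

def restr (f : ℕ → ℕ) (n : ℕ) : ℕ → ℕ := fun i => if i < n then f i else 0

def EvZero (f : ℕ → ℕ) : Prop := ∀ᶠ n in atTop, f n = 0

structure Predictor where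
  D : Set ℕ
  Dinf : D.Infinite
  p : ℕ → (ℕ → ℕ) → ℕ

def Predicts (π : Predictor) (f : ℕ → ℕ) : Prop :=
  ∀ᶠ n in atTop, n ∈ π.D → f n = π.p n (restr f n)

def ZPredicts (π : Predictor) (f : ℕ → ℕ) : Prop :=
  (¬ EvZero f ∧ Predicts π f) ∨ (EvZero f ∧ ¬ Predicts π f)

def listOf (f : ℕ → ℕ) (n : ℕ) : List ℕ := (List.range n).map f

structure PRCond where
  len : ℕ
  ones : Finset ℕ
  ones_lt : ∀ n ∈ ones, n < len
  p : ℕ → List ℕ → Option ℕ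
  p_dom : ∀ n σ, p n σ ≠ none → n ∈ ones ∧ σ.length = n
  p_fin : ∀ n, Set.Finite {σ : List ℕ | p n σ ≠ none}
  F : Set (ℕ → ℕ)
  F_fin : F.Finite
  F_sep : ∀ f ∈ F, ∀ g ∈ F, listOf f len = listOf g len → f = g

def PRle (q p : PRCond) : Prop :=
  p.len ≤ q.len ∧
  (∀ n ∈ p.ones, n ∈ q.ones) ∧
  (∀ n ∈ q.ones, n < p.len → n ∈ p.ones) ∧
  (∀ n ∈ p.ones, ∀ σ v, p.p n σ = some v → q.p n σ = some v) ∧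
  p.F ⊆ q.F ∧
  ∀ n ∈ q.ones, n ∉ p.ones → ∀ f ∈ p.F, q.p n (listOf f n) = some (f n)

lemma listOf_eq_iff {f g : ℕ → ℕ} {k : ℕ} :
    listOf f k = listOf g k ↔ ∀ i < k, f i = g i := by
  simp [listOf, List.map_eq_map_iff]

lemma listOf_length (f : ℕ → ℕ) (k : ℕ) : (listOf f k).length = k := by
  simp [listOf]

theorem stmt7 (c : PRCond) (hc : ∀ f ∈ c.F, ¬ EvZero f)
    (f : ℕ → ℕ) (hf : EvZero f) (m : ℕ) :
    ∃ n ≥ m, ∃ c' : PRCond, PRle c' c ∧ c'.F = c.F ∧ n ∈ c'.ones ∧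
      ∃ v, c'.p n (listOf f n) = some v ∧ v ≠ f n := by
  classical
  obtain ⟨N, hN⟩ := eventually_atTop.mp hf
  set K : (ℕ → ℕ) → ℕ := fun g => if h : ∃ i, N ≤ i ∧ g i ≠ 0 then h.choose else 0 with hK
  have hKspec : ∀ g ∈ c.F, N ≤ K g ∧ g (K g) ≠ 0 := by
    intro g hg
    have h : ∃ i, N ≤ i ∧ g i ≠ 0 := by
      have h1 := Filter.not_eventually.mp (hc g hg)
      obtain ⟨i, hi, hi2⟩ := (Filter.frequently_atTop.mp h1) N
      exact ⟨i, hi, hi2⟩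
    simp only [hK, dif_pos h]
    exact h.choose_spec
  set s := c.F_fin.toFinset with hs
  set M := s.sup K with hM
  set n := max m (max c.len (M + 1)) with hn
  have hnm : m ≤ n := le_max_left _ _
  have hnlen : c.len ≤ n := le_trans (le_max_left _ _) (le_max_right _ _)
  have hKlt : ∀ g ∈ c.F, K g < n := by
    intro g hg
    have h1 : K g ≤ M := Finset.le_sup (by simpa [hs] using hg)
    have h2 : M + 1 ≤ n := le_trans (le_max_right _ _) (le_max_right _ _)
    omega
  have hfg : ∀ g ∈ c.F, listOf g n ≠ listOf f n := by
    intro g hg h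
    have h1 := listOf_eq_iff.mp h (K g) (hKlt g hg)
    have h2 := hN (K g) (hKspec g hg).1
    exact (hKspec g hg).2 (h1.trans h2)
  have hsep : ∀ g ∈ c.F, ∀ g' ∈ c.F, listOf g n = listOf g' n → g = g' := by
    intro g hg g' hg' h
    exact c.F_sep g hg g' hg'
      (listOf_eq_iff.mpr fun i hi => listOf_eq_iff.mp h i (lt_of_lt_of_le hi hnlen))
  have hnnot : n ∉ c.ones := fun h => absurd (c.ones_lt n h) (not_lt.mpr hnlen)
  set P : ℕ → List ℕ → Option ℕ := fun k σ =>
    if k = n then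
      if σ = listOf f n then some (f n + 1)
      else if h : ∃ g, g ∈ c.F ∧ listOf g n = σ then some (h.choose n)
      else none
    else c.p k σ with hP
  have hPg : ∀ g ∈ c.F, P n (listOf g n) = some (g n) := by
    intro g hg
    have hex : ∃ g', g' ∈ c.F ∧ listOf g' n = listOf g n := ⟨g, hg, rfl⟩
    simp only [hP, if_pos rfl, if_neg (hfg g hg), dif_pos hex]
    have := hsep _ hex.choose_spec.1 g hg hex.choose_spec.2
    rw [this]
  have hPf : P n (listOf f n) = some (f n + 1) := by
    simp [hP]
  refine ⟨n, hnm, ⟨n + 1, insert n c.ones, ?_, P, ?_, ?_, c.F, c.F_fin, ?_⟩,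
    ⟨hnlen.trans (Nat.le_succ n), ?_, ?_, ?_, le_refl _, ?_⟩, rfl,
    Finset.mem_insert_self n _, f n + 1, hPf, Nat.succ_ne_self _⟩
  · -- ones_lt
    intro k hk
    rcases Finset.mem_insert.mp hk with h | h
    · omega
    · have := c.ones_lt k h; omega
  · -- p_dom
    intro k σ h
    by_cases hkn : k = n
    · subst hkn
      refine ⟨Finset.mem_insert_self _ _, ?_⟩
      simp only [hP, if_pos rfl] at h
      by_cases h1 : σ = listOf f n
      · rw [h1]; exact listOf_length f n
      · rw [if_neg h1] at h
        by_cases h2 : ∃ g, g ∈ c.F ∧ listOf g n = σ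
        · obtain ⟨g, _, hg2⟩ := h2
          rw [← hg2]; exact listOf_length g n
        · rw [dif_neg h2] at h; exact absurd rfl h
    · simp only [hP, if_neg hkn] at h
      obtain ⟨h1, h2⟩ := c.p_dom k σ h
      exact ⟨Finset.mem_insert_of_mem h1, h2⟩
  · -- p_fin
    intro k
    by_cases hkn : k = n
    · subst hkn
      apply Set.Finite.subset
        (((Set.finite_singleton (listOf f n)).union (c.F_fin.image fun g => listOf g n)))
      intro σ hσ
      simp only [Set.mem_setOf_eq, hP, if_pos rfl] at hσ
      by_cases h1 : σ = listOf f n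
      · exact Or.inl h1
      · rw [if_neg h1] at hσ
        by_cases h2 : ∃ g, g ∈ c.F ∧ listOf g n = σ
        · obtain ⟨g, hg1, hg2⟩ := h2
          exact Or.inr ⟨g, hg1, hg2⟩
        · rw [dif_neg h2] at hσ; exact absurd rfl hσ
    · have : {σ : List ℕ | P k σ ≠ none} = {σ : List ℕ | c.p k σ ≠ none} := by
        ext σ; simp [hP, hkn]
      rw [this]; exact c.p_fin k
  · -- F_sep
    intro g hg g' hg' h
    exact c.F_sep g hg g' hg'
      (listOf_eq_iff.mpr fun i hi =>
        listOf_eq_iff.mp h i (lt_of_lt_of_le hi (hnlen.trans (Nat.le_succ n))))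
  · -- ones mono
    intro k hk; exact Finset.mem_insert_of_mem hk
  · -- reverse ones
    intro k hk hklt
    rcases Finset.mem_insert.mp hk with h | h
    · omega
    · exact h
  · -- p extends
    intro k hk σ v hv
    have hkn : k ≠ n := fun h => hnnot (h ▸ hk)
    simp only [hP, if_neg hkn]; exact hv
  · -- new ones predict
    intro k hk hknot g hg
    rcases Finset.mem_insert.mp hk with h | h
    · subst h; exact hPg g hg
    · exact absurd h hknot
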